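/- Let γ₁, γ₂ ∈ [0,1] and let ε_AD be the two-qubit amplitude damping channel with Kraus operators K_{ab} = M_a^{(γ₁)} ⊗ M_b^{(γ₂)} (a,b ∈ {0,1}), where M₀^{(γ)} = diag(1, √(1−γ)) and M₁^{(γ)} = [[0, √γ],[0,0]]. Then the l₁-norm imaginarity decay of the maximal imaginary state satisfies F_{l₁}(M₊ ⊗ M₊) − F_{l₁}(ε_AD(M₊ ⊗ M₊)) = 2 − √(1−γ₁) − √(1−γ₂). -/

import Mathlib

open Matrix Kronecker BigOperators
open scoped ComplexOrder

noncomputable section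

/-- A density matrix: positive semidefinite with trace 1. -/
def IsDensityMatrix {n : Type*} [Fintype n] [DecidableEq n] (ρ : Matrix n n ℂ) : Prop :=
  ρ.PosSemidef ∧ ρ.trace = 1

/-- The l₁-norm imaginarity measure: sum of |Im ρᵢⱼ| over off-diagonal entries. -/
noncomputable def Fl1 {n : Type*} [Fintype n] [DecidableEq n] (ρ : Matrix n n ℂ) : ℝ :=
  ∑ i, ∑ j, if i = j then 0 else |(ρ i j).im|

/-- The trace norm ‖M‖₁ = Tr √(M†M). -/
noncomputable def traceNorm {n : Type*} [Fintype n] [DecidableEq n] (M : Matrix n n ℂ) : ℝ :=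
  (((Matrix.posSemidef_conjTranspose_mul_self M).1.eigenvectorUnitary : Matrix n n ℂ) *
    diagonal (fun i => ((Real.sqrt ((Matrix.posSemidef_conjTranspose_mul_self M).1.eigenvalues i) : ℝ) : ℂ)) *
    (star (Matrix.posSemidef_conjTranspose_mul_self M).1.eigenvectorUnitary : Matrix n n ℂ)).trace.re

/-- The robustness of imaginarity: (1/2)‖ρ − ρᵀ‖₁. -/
noncomputable def FR {n : Type*} [Fintype n] [DecidableEq n] (ρ : Matrix n n ℂ) : ℝ :=
  traceNorm (ρ - ρᵀ) / 2

/-- Von Neumann entropy (base-2), via eigenvalues of a Hermitian matrix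
(junk value 0 if not Hermitian). -/
noncomputable def vnEntropy {n : Type*} [Fintype n] [DecidableEq n] (σ : Matrix n n ℂ) : ℝ :=
  if h : σ.IsHermitian then -∑ j, (h.eigenvalues j) * Real.logb 2 (h.eigenvalues j) else 0

/-- The relative entropy of imaginarity: S(Re ρ) − S(ρ), Re ρ = (ρ + ρᵀ)/2. -/
noncomputable def Fr {n : Type*} [Fintype n] [DecidableEq n] (ρ : Matrix n n ℂ) : ℝ :=
  vnEntropy ((1/2 : ℂ) • (ρ + ρᵀ)) - vnEntropy ρ

/-- The canonical single-qubit state ρ_A. -/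
noncomputable def rhoA (A : ℝ) : Matrix (Fin 2) (Fin 2) ℂ :=
  !![(((1 + A) / 2 : ℝ) : ℂ), -(Complex.I / 2) * (Real.sqrt (1 - A ^ 2) : ℂ);
     (Complex.I / 2) * (Real.sqrt (1 - A ^ 2) : ℂ), (((1 - A) / 2 : ℝ) : ℂ)]

/-- Density matrix of the maximal imaginary state |+⟩ = (|0⟩ + i|1⟩)/√2. -/
noncomputable def Mplus : Matrix (Fin 2) (Fin 2) ℂ :=
  (1/2 : ℂ) • !![1, -Complex.I; Complex.I, 1]

/-- Single-qubit amplitude damping Kraus operators. -/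
noncomputable def adKraus (γ : ℝ) : Fin 2 → Matrix (Fin 2) (Fin 2) ℂ :=
  ![!![1, 0; 0, (Real.sqrt (1 - γ) : ℂ)], !![0, (Real.sqrt γ : ℂ); 0, 0]]

/-- The two-qubit amplitude damping channel. -/
noncomputable def ad2 (γ₁ γ₂ : ℝ) (ρ : Matrix (Fin 2 × Fin 2) (Fin 2 × Fin 2) ℂ) :
    Matrix (Fin 2 × Fin 2) (Fin 2 × Fin 2) ℂ :=
  ∑ a : Fin 2, ∑ b : Fin 2,
    (adKraus γ₁ a ⊗ₖ adKraus γ₂ b) * ρ * (adKraus γ₁ a ⊗ₖ adKraus γ₂ b)ᴴ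

/-!
The channel acts factorwise on product states, and on a single qubit it multiplies the
off-diagonal entries by `√(1 - γ)`, so `ε_AD(M₊ ⊗ M₊) = dampedPlus γ₁ ⊗ dampedPlus γ₂` with
`M₊ = dampedPlus 0`. These matrices have real diagonal and purely imaginary off-diagonal entries;
in a Kronecker product of such matrices the product of two off-diagonal entries is real, so only
"diagonal × off-diagonal" entries contribute to `F_{l₁}`. As the diagonals are nonnegative with
unit sum, `F_{l₁}` is then additive: `F_{l₁}(dampedPlus γ₁ ⊗ dampedPlus γ₂) = √(1 - γ₁) + √(1 - γ₂)`.
-/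

section Kronecker

variable {m n : Type*} [Fintype m] [DecidableEq m] [Fintype n] [DecidableEq n]

theorem Fl1_kronecker {A : Matrix m m ℂ} {B : Matrix n n ℂ}
    (hA : ∀ i, (A i i).im = 0) (hA' : (A.map Complex.re).IsDiag)
    (hB : ∀ i, (B i i).im = 0) (hB' : (B.map Complex.re).IsDiag) :
    Fl1 (A ⊗ₖ B) = (∑ i, |(A i i).re|) * Fl1 B + Fl1 A * ∑ i, |(B i i).re| := by
  have term : ∀ i₁ j₁ i₂ j₂,
      (if (i₁, i₂) = (j₁, j₂) then 0 else |(A i₁ j₁ * B i₂ j₂).im|)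
        = (if i₁ = j₁ then |(A i₁ j₁).re| else 0) * (if i₂ = j₂ then 0 else |(B i₂ j₂).im|)
          + (if i₁ = j₁ then 0 else |(A i₁ j₁).im|) * (if i₂ = j₂ then |(B i₂ j₂).re| else 0) := by
    intro i₁ j₁ i₂ j₂
    by_cases h₁ : i₁ = j₁ <;> by_cases h₂ : i₂ = j₂
    · subst h₁ h₂; simp
    · subst h₁; simp [h₂, hA, abs_mul]
    · subst h₂; simp [h₁, hB, abs_mul]
    · have hA₁ : (A i₁ j₁).re = 0 := hA' h₁
      have hB₂ : (B i₂ j₂).re = 0 := hB' h₂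
      simp [h₁, h₂, hA₁, hB₂]
  simp only [Fl1, Fintype.sum_prod_type, kroneckerMap_apply, term]
  simp only [Finset.sum_add_distrib, ← Finset.sum_mul_sum, Finset.sum_ite_eq, Finset.mem_univ,
    if_true]

end Kronecker

def adChannel (γ : ℝ) (ρ : Matrix (Fin 2) (Fin 2) ℂ) : Matrix (Fin 2) (Fin 2) ℂ :=
  ∑ a, adKraus γ a * ρ * (adKraus γ a)ᴴ

theorem ad2_kronecker (γ₁ γ₂ : ℝ) (ρ σ : Matrix (Fin 2) (Fin 2) ℂ) :
    ad2 γ₁ γ₂ (ρ ⊗ₖ σ) = adChannel γ₁ ρ ⊗ₖ adChannel γ₂ σ := by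
  simp only [ad2, adChannel, conjTranspose_kronecker, ← mul_kronecker_mul, Fin.sum_univ_two,
    add_kronecker, kronecker_add]
  abel

theorem adChannel_eq {γ : ℝ} (h₀ : 0 ≤ γ) (h₁ : γ ≤ 1) (ρ : Matrix (Fin 2) (Fin 2) ℂ) :
    adChannel γ ρ = !![ρ 0 0 + γ * ρ 1 1, Real.sqrt (1 - γ) * ρ 0 1;
      Real.sqrt (1 - γ) * ρ 1 0, (1 - γ) * ρ 1 1] := by
  have hγ : (Real.sqrt γ : ℂ) * Real.sqrt γ = γ := by exact_mod_cast Real.mul_self_sqrt h₀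
  have hγ' : (Real.sqrt (1 - γ) : ℂ) * Real.sqrt (1 - γ) = 1 - γ := by
    exact_mod_cast Real.mul_self_sqrt (sub_nonneg.2 h₁)
  ext i j
  fin_cases i <;> fin_cases j <;>
    simp only [adChannel, Matrix.sum_apply, Fin.sum_univ_two, mul_apply, conjTranspose_apply] <;>
    simp [adKraus] <;>
    first | ring1 | linear_combination ρ 1 1 * hγ | linear_combination ρ 1 1 * hγ'

def dampedPlus (γ : ℝ) : Matrix (Fin 2) (Fin 2) ℂ :=
  !![(((1 + γ) / 2 : ℝ) : ℂ), -(Complex.I / 2) * (Real.sqrt (1 - γ) : ℂ);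
     (Complex.I / 2) * (Real.sqrt (1 - γ) : ℂ), (((1 - γ) / 2 : ℝ) : ℂ)]

theorem dampedPlus_zero : dampedPlus 0 = Mplus := by
  ext i j
  fin_cases i <;> fin_cases j <;> simp [dampedPlus, Mplus] <;> ring

theorem adChannel_dampedPlus_zero {γ : ℝ} (h₀ : 0 ≤ γ) (h₁ : γ ≤ 1) :
    adChannel γ (dampedPlus 0) = dampedPlus γ := by
  rw [adChannel_eq h₀ h₁]
  ext i j
  fin_cases i <;> fin_cases j <;> simp [dampedPlus] <;> ring

theorem im_dampedPlus_diag (γ : ℝ) (i : Fin 2) : (dampedPlus γ i i).im = 0 := by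
  fin_cases i <;> simp [dampedPlus]

theorem isDiag_map_re_dampedPlus (γ : ℝ) : ((dampedPlus γ).map Complex.re).IsDiag := by
  intro i j hij
  fin_cases i <;> fin_cases j <;> simp_all [dampedPlus]

theorem Fl1_dampedPlus (γ : ℝ) : Fl1 (dampedPlus γ) = Real.sqrt (1 - γ) := by
  simp [Fl1, dampedPlus, Fin.sum_univ_two, abs_of_nonneg (Real.sqrt_nonneg _)]
  ring

theorem sum_abs_re_dampedPlus_diag {γ : ℝ} (hγ : γ ∈ Set.Icc (-1 : ℝ) 1) :
    ∑ i, |(dampedPlus γ i i).re| = 1 := by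
  obtain ⟨h₀, h₁⟩ := hγ
  simp only [dampedPlus, Fin.sum_univ_two]
  simp
  rw [abs_of_nonneg (by linarith), abs_of_nonneg (by linarith)]
  ring

theorem Fl1_dampedPlus_kronecker {γ₁ γ₂ : ℝ} (h₁ : γ₁ ∈ Set.Icc (-1 : ℝ) 1)
    (h₂ : γ₂ ∈ Set.Icc (-1 : ℝ) 1) :
    Fl1 (dampedPlus γ₁ ⊗ₖ dampedPlus γ₂) = Real.sqrt (1 - γ₁) + Real.sqrt (1 - γ₂) := by
  rw [Fl1_kronecker (im_dampedPlus_diag γ₁) (isDiag_map_re_dampedPlus γ₁)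
    (im_dampedPlus_diag γ₂) (isDiag_map_re_dampedPlus γ₂), sum_abs_re_dampedPlus_diag h₁,
    sum_abs_re_dampedPlus_diag h₂, Fl1_dampedPlus, Fl1_dampedPlus]
  ring

/-- l₁-norm de-imaginary decay of M₊ ⊗ M₊ under two-qubit amplitude
damping. -/
theorem ad2_l1_decay (γ₁ γ₂ : ℝ) (h₁0 : 0 ≤ γ₁) (h₁1 : γ₁ ≤ 1) (h₂0 : 0 ≤ γ₂) (h₂1 : γ₂ ≤ 1) :
    Fl1 (Mplus ⊗ₖ Mplus) - Fl1 (ad2 γ₁ γ₂ (Mplus ⊗ₖ Mplus))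
      = 2 - Real.sqrt (1 - γ₁) - Real.sqrt (1 - γ₂) := by
  have h₁ : γ₁ ∈ Set.Icc (-1 : ℝ) 1 := ⟨by linarith, h₁1⟩
  have h₂ : γ₂ ∈ Set.Icc (-1 : ℝ) 1 := ⟨by linarith, h₂1⟩
  have h₀ : (0 : ℝ) ∈ Set.Icc (-1 : ℝ) 1 := by norm_num
  rw [← dampedPlus_zero, ad2_kronecker, adChannel_dampedPlus_zero h₁0 h₁1,
    adChannel_dampedPlus_zero h₂0 h₂1, Fl1_dampedPlus_kronecker h₀ h₀,
    Fl1_dampedPlus_kronecker h₁ h₂]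
  norm_num
  ring
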